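/- For positive integers A, B with 2B ≤ A and T_AB = 2 + ⌈(2A − B)/B⌉, the achieved sum-DoF satisfies 4A / T_AB > 4B/3, i.e., the STIA sum-DoF with local CSIT strictly exceeds the GAK sum-DoF with global delayed CSIT in this antenna regime, provided A ≥ 2B ≥ 2. -/
import Mathlib


theorem stmt_3 (A B : ℕ) (hB : 1 ≤ B) (hBA : 2 * B ≤ A) :
    (4 * (A : ℚ)) / ((2 : ℚ) + (⌈(2 * (A : ℚ) - B) / B⌉ : ℤ)) > 4 * (B : ℚ) / 3 := by
  have hBpos : (0:ℚ) < B := by exact_mod_cast hB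
  have hBA' : 2 * (B:ℚ) ≤ A := by exact_mod_cast hBA
  set c : ℤ := ⌈(2 * (A : ℚ) - B) / B⌉ with hc
  have hx : (1:ℚ) ≤ (2 * (A : ℚ) - B) / B := by
    rw [le_div_iff₀ hBpos]; linarith
  have hc1 : (1:ℚ) ≤ (c:ℚ) := le_trans hx (Int.le_ceil _)
  have hden : (0:ℚ) < 2 + (c:ℚ) := by linarith
  have hclt : (c:ℚ) < (2 * (A : ℚ) - B) / B + 1 := Int.ceil_lt_add_one _
  have hmul : ((2 * (A : ℚ) - B) / B) * B = 2 * (A:ℚ) - B :=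
    div_mul_cancel₀ _ (ne_of_gt hBpos)
  have hbc : (B:ℚ) * c < 2 * A := by nlinarith
  rw [gt_iff_lt, div_lt_div_iff₀ (by norm_num) hden]
  nlinarith
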